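/- Fix n ∈ ℕ and let M(·,t) be a computable nondecreasing-in-t approximation of M from below. Define z inductively: start with z = ε; while there exist t and b with M(zb,t) > 2^{-n}, replace z by z¬b for the first such (t,b). Then this process terminates after finitely many steps, and the resulting z satisfies M(z0) + M(z1) ≤ 2^{1−n}. -/

import Mathlib

/-!
If the process never stopped it would produce `z₀ ⊂ z₁ ⊂ ⋯` with `z_{N+1} = z_N (¬b_N)` and
`M(z_N b_N) > 2^{-n}`, and the strings `z_N b_N` form an infinite antichain. Identify a program `p`
with the dyadic interval of reals whose binary expansion begins with `p`. The minimal programs for a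
string `y` are prefix-free, so their intervals are disjoint with total length `M(y)`; we get
infinitely many subsets of `[0, 1)` of measure `> 2^{-n}`, and some real `x` lies in infinitely
many of them. The corresponding programs are all prefixes of the expansion of `x`, and they produce extensions of
distinct antichain elements. Monotonicity of the machine forces the longer of two such programs to
have the strictly shorter output, which no infinite chain of programs can satisfy.
Once the process stops, `M(z b) = lim_t M(z b, t) ≤ 2^{-n}` for both bits `b`.
-/

open Filter ENNReal

/-- Finite binary strings. -/
abbrev BStr := List Bool

/-- A recursively enumerable set of program/output pairs. -/
def RECoded (L : Set (BStr × BStr)) : Prop :=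
  ∃ f : ℕ → Option (BStr × BStr), Computable f ∧ L = {x | ∃ n, f n = some x}

/-- A set of strings is prefix-free if no element is a proper prefix of another. -/
def PrefixFreeSet (S : Set BStr) : Prop :=
  ∀ p ∈ S, ∀ q ∈ S, p <+: q → p = q

/-- A prefix machine: r.e. set of pairs whose programs form a prefix-free set. -/
def PrefixMachine (L : Set (BStr × BStr)) : Prop :=
  RECoded L ∧ PrefixFreeSet {p | ∃ y, (p, y) ∈ L}

/-- A monotone machine. -/
def MonotoneMachine (L : Set (BStr × BStr)) : Prop :=
  RECoded L ∧ ∀ p y q x, (p, y) ∈ L → (q, x) ∈ L → y.length ≤ x.length → p <+: q → y <+: x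

/-- `y ∈ L(p)` for a monotone machine `L`. -/
def MonOut (L : Set (BStr × BStr)) (p y : BStr) : Prop :=
  (∃ x, (p, x) ∈ L ∧ y <+: x) ∧ ∀ q z, (q, z) ∈ L → q <+: p → q ≠ p → ¬ y <+: z

/-- `λ_L(y) = Σ_{p : (p,y) ∈ L} 2^{-ℓ(p)}` for a prefix machine. -/
noncomputable def lamP (L : Set (BStr × BStr)) (y : BStr) : ℝ≥0∞ :=
  ∑' p : {p : BStr // (p, y) ∈ L}, (2 : ℝ≥0∞)⁻¹ ^ (p : BStr).length

/-- `M_L(y) = Σ_{p : y ∈ L(p)} 2^{-ℓ(p)}` for a monotone machine. -/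
noncomputable def MM (L : Set (BStr × BStr)) (y : BStr) : ℝ≥0∞ :=
  ∑' p : {p : BStr // MonOut L p y}, (2 : ℝ≥0∞)⁻¹ ^ (p : BStr).length

/-- A universal prefix machine: `(p,y) ∈ L ↔ (i'p, y) ∈ U` for some prefix code `i'` of `L`. -/
def IsUniversalPrefix (U : Set (BStr × BStr)) : Prop :=
  PrefixMachine U ∧ ∀ L, PrefixMachine L → ∃ ip : BStr,
    ∀ p y, ((p, y) ∈ L ↔ (ip ++ p, y) ∈ U)

/-- A universal monotone machine. -/
def IsUniversalMonotone (U : Set (BStr × BStr)) : Prop :=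
  MonotoneMachine U ∧ ∀ L, MonotoneMachine L → ∃ ip : BStr,
    ∀ p y, ((p, y) ∈ L ↔ (ip ++ p, y) ∈ U)

/-- Prefix Kolmogorov complexity w.r.t. a (universal) prefix machine `U`. -/
noncomputable def Kc (U : Set (BStr × BStr)) (y : BStr) : ℕ :=
  sInf {n | ∃ p : BStr, (p, y) ∈ U ∧ p.length = n}

/-- Complexity of a natural number via its binary representation. -/
noncomputable def KNat (U : Set (BStr × BStr)) (n : ℕ) : ℕ := Kc U (Nat.bits n)

/-- The first `n` bits of an infinite binary string. -/
def pre (ω : ℕ → Bool) (n : ℕ) : BStr := (List.range n).map ω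

open Classical in
/-- One step of the flip-the-predicted-bit process with threshold 2^{-n}: if for some
(t,b) (coded by k, first k taken) the approximation of M at zb exceeds 2^{-n}, extend
z by ¬b, else stop. -/
noncomputable def pstep (Mt : BStr → ℕ → ℚ) (n : ℕ) (z : BStr) : BStr :=
  if h : ∃ k : ℕ, ((2 : ℚ) ^ n)⁻¹ < Mt (z ++ [decide (k % 2 = 1)]) (k / 2) then
    z ++ [!(decide (Nat.find h % 2 = 1))]
  else z

open MeasureTheory Function

/-- The real number `0.p` written in binary. -/
noncomputable def dyadicLeft : BStr → ℝ
  | [] => 0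
  | b :: p => ((b.toNat : ℝ) + dyadicLeft p) / 2

def dyadicInterval (p : BStr) : Set ℝ :=
  Set.Ico (dyadicLeft p) (dyadicLeft p + 2⁻¹ ^ p.length)

theorem mem_dyadicInterval_cons {x : ℝ} {b : Bool} {p : BStr} :
    x ∈ dyadicInterval (b :: p) ↔ 2 * x - b.toNat ∈ dyadicInterval p := by
  simp only [dyadicInterval, dyadicLeft, List.length_cons, pow_succ, Set.mem_Ico]
  constructor <;> rintro ⟨h₁, h₂⟩ <;> constructor <;> linarith

theorem dyadicInterval_nil : dyadicInterval [] = Set.Ico 0 1 := by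
  simp [dyadicInterval, dyadicLeft]

theorem dyadicInterval_subset_Ico (p : BStr) : dyadicInterval p ⊆ Set.Ico 0 1 := by
  induction p with
  | nil => exact dyadicInterval_nil.subset
  | cons b p ih =>
    intro x hx
    have h := ih (mem_dyadicInterval_cons.1 hx)
    have hb : (b.toNat : ℝ) ≤ 1 := by exact_mod_cast b.toNat_le
    simp only [Set.mem_Ico] at h ⊢
    constructor <;> linarith [h.1, h.2, (b.toNat.cast_nonneg : (0 : ℝ) ≤ b.toNat)]

theorem prefix_or_prefix_of_mem_dyadicInterval {x : ℝ} {p q : BStr}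
    (hp : x ∈ dyadicInterval p) (hq : x ∈ dyadicInterval q) : p <+: q ∨ q <+: p := by
  induction p generalizing q x with
  | nil => exact .inl List.nil_prefix
  | cons b p ih =>
    cases q with
    | nil => exact .inr List.nil_prefix
    | cons c q =>
      rw [mem_dyadicInterval_cons] at hp hq
      -- the first bit is read off from whether `x` lies in `[0, 1/2)` or in `[1/2, 1)`
      obtain rfl : b = c := by
        have hp' := dyadicInterval_subset_Ico p hp
        have hq' := dyadicInterval_subset_Ico q hq
        simp only [Set.mem_Ico] at hp' hq'
        cases b <;> cases c <;> simp at hp' hq' ⊢ <;> linarith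
      simpa using ih hp hq

theorem volume_dyadicInterval (p : BStr) : volume (dyadicInterval p) = 2⁻¹ ^ p.length := by
  rw [dyadicInterval, Real.volume_Ico, add_sub_cancel_left, ENNReal.ofReal_pow (by norm_num),
    ENNReal.ofReal_inv_of_pos two_pos, ENNReal.ofReal_ofNat]

theorem volume_iUnion_dyadicInterval {S : Set BStr} (hS : PrefixFreeSet S) :
    volume (⋃ p : S, dyadicInterval p) = ∑' p : S, (2 : ℝ≥0∞)⁻¹ ^ (p : BStr).length := by
  have hd : Pairwise (Disjoint on fun p : S => dyadicInterval p) := by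
    intro p q hpq
    refine Set.disjoint_left.2 fun x hp hq => hpq (Subtype.ext ?_)
    rcases prefix_or_prefix_of_mem_dyadicInterval hp hq with h | h
    · exact hS p p.2 q q.2 h
    · exact (hS q q.2 p p.2 h).symm
  simp only [measure_iUnion hd fun _ => measurableSet_Ico, volume_dyadicInterval]

theorem exists_frequently_mem_of_le_measure {α : Type*} [MeasurableSpace α] {μ : Measure α}
    {s : ℕ → Set α} {ε : ℝ≥0∞} (hs : ∀ N, MeasurableSet (s N)) (hfin : μ (⋃ N, s N) ≠ ∞)
    (hε : ε ≠ 0) (h : ∀ N, ε ≤ μ (s N)) : ∃ x, ∃ᶠ N in atTop, x ∈ s N := by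
  have hanti : Antitone fun K => ⋃ N ≥ K, s N :=
    fun K K' hK => Set.biUnion_subset_biUnion_left fun N hN => le_trans hK hN
  have hlimsup : ε ≤ μ (limsup s atTop) := by
    simp only [limsup_eq_iInf_iSup_of_nat, Set.iInf_eq_iInter, Set.iSup_eq_iUnion]
    rw [hanti.measure_iInter
      (fun K => (MeasurableSet.biUnion (Set.to_countable _) fun N _ => hs N).nullMeasurableSet)
      ⟨0, by simpa using hfin⟩]
    exact le_iInf fun K =>
      (h K).trans (measure_mono (Set.subset_biUnion_of_mem (u := s) (le_refl K)))
  obtain ⟨x, hx⟩ := nonempty_of_measure_ne_zero (ne_bot_of_le_ne_bot hε hlimsup)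
  exact ⟨x, mem_limsup_iff_frequently_mem.1 hx⟩

theorem prefixFreeSet_monOut (L : Set (BStr × BStr)) (y : BStr) :
    PrefixFreeSet {p | MonOut L p y} := by
  intro p hp q hq hpq
  by_contra hne
  obtain ⟨x, hx, hyx⟩ := hp.1
  exact hq.2 p x hx hpq hne hyx

theorem MM_eq_volume (L : Set (BStr × BStr)) (y : BStr) :
    MM L y = volume (⋃ p : {p | MonOut L p y}, dyadicInterval p) :=
  (volume_iUnion_dyadicInterval (prefixFreeSet_monOut L y)).symm

namespace MonotoneMachine

variable {L : Set (BStr × BStr)}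

theorem length_lt_of_prefix (hL : MonotoneMachine L) {p q w x y y' : BStr}
    (hp : (p, w) ∈ L) (hq : (q, x) ∈ L) (hpq : p <+: q) (hyw : y <+: w) (hy'x : y' <+: x)
    (hyy' : ¬ y <+: y') (hy'y : ¬ y' <+: y) : x.length < w.length := by
  by_contra! hwx
  rcases List.prefix_or_prefix_of_prefix (hyw.trans (hL.2 p w q x hp hq hwx hpq)) hy'x with h | h
  exacts [hyy' h, hy'y h]

theorem not_frequently_mem_dyadicInterval (hL : MonotoneMachine L) {y : ℕ → BStr}
    (hy : Pairwise fun N N' => ¬ y N <+: y N') (z : ℝ) :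
    ¬ ∃ᶠ N in atTop, ∃ p, MonOut L p (y N) ∧ z ∈ dyadicInterval p := by
  intro hfreq
  set S := {N | ∃ p, MonOut L p (y N) ∧ z ∈ dyadicInterval p}
  have hS : S.Infinite := Nat.frequently_atTop_iff_infinite.1 hfreq
  choose! P hPout hPz using fun N (hN : N ∈ S) => hN
  choose! W hW hyW using fun N (hN : N ∈ S) => (hPout N hN).1
  have hshorter : ∀ N ∈ S, ∀ N' ∈ S, N ≠ N' → P N <+: P N' → (W N').length < (W N).length :=
    fun N hN N' hN' hne hP => hL.length_lt_of_prefix (hW N hN) (hW N' hN') hP (hyW N hN)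
      (hyW N' hN') (hy hne) (hy hne.symm)
  have hcomp : ∀ N ∈ S, ∀ N' ∈ S, P N <+: P N' ∨ P N' <+: P N :=
    fun N hN N' hN' => prefix_or_prefix_of_mem_dyadicInterval (hPz N hN) (hPz N' hN')
  have hinj : S.InjOn fun N => (P N).length := by
    intro N hN N' hN' hlen
    by_contra hne
    have heq : P N = P N' := by
      rcases hcomp N hN N' hN' with h | h
      exacts [h.eq_of_length hlen, (h.eq_of_length hlen.symm).symm]
    exact (hshorter N hN N' hN' hne (by rw [heq])).not_gt
      (hshorter N' hN' N hN (Ne.symm hne) (by rw [heq]))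
  obtain ⟨N₀, hN₀, hmin⟩ := (measure fun N => (W N).length).wf.has_min S hS.nonempty
  obtain ⟨_, ⟨N₁, hN₁, rfl⟩, hlt⟩ := (hS.image hinj).exists_gt (P N₀).length
  have hpre : P N₀ <+: P N₁ :=
    (hcomp N₀ hN₀ N₁ hN₁).resolve_right fun h => h.length_le.not_gt hlt
  exact hmin N₁ hN₁ (hshorter N₀ hN₀ N₁ hN₁ (by rintro rfl; exact lt_irrefl _ hlt) hpre)

theorem exists_MM_lt (hL : MonotoneMachine L) {y : ℕ → BStr}
    (hy : Pairwise fun N N' => ¬ y N <+: y N') {ε : ℝ≥0∞} (hε : ε ≠ 0) : ∃ N, MM L (y N) < ε := by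
  by_contra! h
  have hsub : (⋃ N, ⋃ p : {p | MonOut L p (y N)}, dyadicInterval p) ⊆ Set.Ico 0 1 :=
    Set.iUnion_subset fun N => Set.iUnion_subset fun p => dyadicInterval_subset_Ico p
  obtain ⟨z, hz⟩ := exists_frequently_mem_of_le_measure
    (s := fun N => ⋃ p : {p | MonOut L p (y N)}, dyadicInterval p)
    (fun N => MeasurableSet.iUnion fun _ => measurableSet_Ico)
    (ne_top_of_le_ne_top (by simp) (measure_mono hsub)) hε
    fun N => (h N).trans_eq (MM_eq_volume L (y N))
  exact hL.not_frequently_mem_dyadicInterval hy z (hz.mono fun N hN => by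
    simpa only [Set.mem_iUnion, Subtype.exists, Set.mem_ofPred_eq, exists_prop] using hN)

end MonotoneMachine

theorem exists_bool_nat_iff {P : Bool → ℕ → Prop} :
    (∃ k : ℕ, P (decide (k % 2 = 1)) (k / 2)) ↔ ∃ b t, P b t := by
  refine ⟨fun ⟨k, hk⟩ => ⟨_, _, hk⟩, fun ⟨b, t, h⟩ => ⟨2 * t + b.toNat, ?_⟩⟩
  cases b <;> simpa [Nat.add_mod, Nat.add_div] using h

section FlipProcess

variable {Mt : BStr → ℕ → ℚ} {n : ℕ} {z : BStr}

theorem pstep_eq_self_iff : pstep Mt n z = z ↔ ∀ b t, Mt (z ++ [b]) t ≤ ((2 : ℚ) ^ n)⁻¹ := by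
  have hcode := exists_bool_nat_iff (P := fun b t => ((2 : ℚ) ^ n)⁻¹ < Mt (z ++ [b]) t)
  unfold pstep
  split_ifs with h
  · obtain ⟨b, t, hbt⟩ := hcode.1 h
    exact iff_of_false (by simp) fun hle => hbt.not_ge (hle b t)
  · exact iff_of_true rfl fun b t => not_lt.1 fun hlt => h (hcode.2 ⟨b, t, hlt⟩)

theorem exists_pstep_eq_append_not (h : pstep Mt n z ≠ z) :
    ∃ b t, ((2 : ℚ) ^ n)⁻¹ < Mt (z ++ [b]) t ∧ pstep Mt n z = z ++ [!b] := by
  unfold pstep at h ⊢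
  split_ifs at h ⊢ with hex
  · exact ⟨_, _, Nat.find_spec hex, rfl⟩
  · exact absurd rfl h

end FlipProcess

theorem pairwise_not_prefix_append_of_append_not {z : ℕ → BStr} {b : ℕ → Bool}
    (hz : ∀ N, z (N + 1) = z N ++ [!b N]) :
    Pairwise fun A B => ¬ z A ++ [b A] <+: z B ++ [b B] := by
  have hmono : ∀ A B, A < B → z (A + 1) <+: z B := by
    intro A B hAB
    induction B, hAB using Nat.le_induction with
    | base => exact List.prefix_refl _
    | succ B _ ih => exact ih.trans (hz B ▸ List.prefix_append _ _)
  intro A B hAB h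
  rcases hAB.lt_or_gt with hlt | hlt
  · have h' : z A ++ [!b A] <+: z B ++ [b B] :=
      hz A ▸ (hmono A B hlt).trans (List.prefix_append _ _)
    have := List.prefix_of_prefix_length_le h h' (by simp)
    simp at this
  · have hlenA := (hmono B A hlt).length_le
    have hlenB := h.length_le
    simp only [hz B, List.length_append, List.length_singleton] at hlenA hlenB
    omega

theorem ofReal_two_pow_inv (n : ℕ) :
    ENNReal.ofReal ((((2 : ℚ) ^ n)⁻¹ : ℚ) : ℝ) = ((2 : ℝ≥0∞) ^ n)⁻¹ := by
  push_cast
  rw [ENNReal.ofReal_inv_of_pos (by positivity), ENNReal.ofReal_pow zero_le_two,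
    ENNReal.ofReal_ofNat]

theorem two_pow_inv_add_self (n : ℕ) :
    ((2 : ℝ≥0∞) ^ n)⁻¹ + ((2 : ℝ≥0∞) ^ n)⁻¹ = 2 ^ ((1 : ℤ) - n) := by
  rw [← two_mul, sub_eq_add_neg, ENNReal.zpow_add two_ne_zero ofNat_ne_top, ENNReal.zpow_neg,
    zpow_natCast, zpow_one]

theorem flip_process_terminates_general (UM : Set (BStr × BStr)) (hUM : IsUniversalMonotone UM)
    (Mt : BStr → ℕ → ℚ)
    (hmono : ∀ x t, Mt x t ≤ Mt x (t + 1))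
    (hlim : ∀ x, Tendsto (fun t => ENNReal.ofReal ((Mt x t : ℝ))) atTop (nhds (MM UM x)))
    (n : ℕ) :
    ∃ N : ℕ, (pstep Mt n)^[N + 1] [] = (pstep Mt n)^[N] [] ∧
      ∀ N' : ℕ, (pstep Mt n)^[N' + 1] [] = (pstep Mt n)^[N'] [] →
        MM UM ((pstep Mt n)^[N'] [] ++ [false]) + MM UM ((pstep Mt n)^[N'] [] ++ [true]) ≤
          (2 : ℝ≥0∞) ^ ((1 : ℤ) - n) := by
  have hbelow : ∀ x t, ENNReal.ofReal (Mt x t) ≤ MM UM x := fun x =>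
    (monotone_nat_of_le_succ fun t =>
      ENNReal.ofReal_le_ofReal (by exact_mod_cast hmono x t)).ge_of_tendsto (hlim x)
  obtain ⟨N, hN⟩ : ∃ N, (pstep Mt n)^[N + 1] [] = (pstep Mt n)^[N] [] := by
    by_contra! h
    simp only [Function.iterate_succ_apply'] at h
    choose b t hbt hstep using fun N => exists_pstep_eq_append_not (h N)
    obtain ⟨N, hN⟩ := hUM.1.exists_MM_lt (ε := ((2 : ℝ≥0∞) ^ n)⁻¹)
      (pairwise_not_prefix_append_of_append_not (z := fun N => (pstep Mt n)^[N] []) fun N =>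
        (Function.iterate_succ_apply' _ _ _).trans (hstep N)) (by simp)
    refine hN.not_ge ((ofReal_two_pow_inv n).symm.trans_le ((ENNReal.ofReal_le_ofReal ?_).trans
      (hbelow _ (t N))))
    exact_mod_cast (hbt N).le
  refine ⟨N, hN, fun N' hN' => ?_⟩
  rw [Function.iterate_succ_apply', pstep_eq_self_iff] at hN'
  have habove : ∀ b, MM UM ((pstep Mt n)^[N'] [] ++ [b]) ≤ ((2 : ℝ≥0∞) ^ n)⁻¹ := fun b =>
    ofReal_two_pow_inv n ▸ le_of_tendsto' (hlim _) fun t =>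
      ENNReal.ofReal_le_ofReal (by exact_mod_cast hN' b t)
  exact (add_le_add (habove false) (habove true)).trans_eq (two_pow_inv_add_self n)

/-- the process terminates and the resulting z satisfies
M(z0) + M(z1) ≤ 2^{1-n}. -/
theorem flip_process_terminates (UM : Set (BStr × BStr)) (hUM : IsUniversalMonotone UM)
    (Mt : BStr → ℕ → ℚ) (hcomp : Computable₂ Mt)
    (hmono : ∀ x t, Mt x t ≤ Mt x (t + 1))
    (hlim : ∀ x, Tendsto (fun t => ENNReal.ofReal ((Mt x t : ℝ))) atTop (nhds (MM UM x)))
    (n : ℕ) :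
    ∃ N : ℕ, (pstep Mt n)^[N + 1] [] = (pstep Mt n)^[N] [] ∧
      ∀ N' : ℕ, (pstep Mt n)^[N' + 1] [] = (pstep Mt n)^[N'] [] →
        MM UM ((pstep Mt n)^[N'] [] ++ [false]) + MM UM ((pstep Mt n)^[N'] [] ++ [true]) ≤
          (2 : ℝ≥0∞) ^ ((1 : ℤ) - n) :=
  flip_process_terminates_general UM hUM Mt hmono hlim n
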